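/- arXiv:0903.4973 — 2 statements merged into one kernel-verified Lean document; each statement's English description precedes it below -/
import Mathlib

section
/- The Mùi invariant in m+1 variables factors as V_{m+1}(t_1,…,t_m,X) = ∏_{λ ∈ F_p^m} (λ_1 t_1 + ⋯ + λ_m t_m + X), and as a function of the last variable X it is additive: V_{m+1}(t_1,…,t_m, X + Y) = V_{m+1}(t_1,…,t_m, X) + V_{m+1}(t_1,…,t_m, Y) in F_p[t_1,…,t_m,X,Y]. -/
/-!
If `f : G →+ R` embeds a finite group into a domain, then `V(x) = ∏_{g}(x - f g)` is invariant
under translation by `f(G)` and vanishes there. For fixed `y`, the polynomial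
`V(x + y) - V(x) - V(y)` in `x` therefore vanishes at the `|G|` points of `f(G)`, while its degree
is below `|G|` because the leading terms of the two monic polynomials of degree `|G|` cancel; so it
is zero. The Mùi invariant is `V` for `G = F_p^m` and `f λ = λ_1 t_1 + ⋯ + λ_m t_m`, up to
replacing `λ` by `-λ`.
-/

open MvPolynomial Finset

/-- `V_{m+1}(t_1,…,t_m, u) = ∏_{λ ∈ F_p^m} (λ_1 t_1 + ⋯ + λ_m t_m + u)`, as a function of a
polynomial `u` in the ring `F_p[t_1,…,t_m,X,Y]` (variables `Sum.inl i` are the `t_i`,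
`Sum.inr false` is `X` and `Sum.inr true` is `Y`). -/
noncomputable def muiAt (p : ℕ) [Fact p.Prime] (m : ℕ)
    (u : MvPolynomial (Fin m ⊕ Bool) (ZMod p)) : MvPolynomial (Fin m ⊕ Bool) (ZMod p) :=
  ∏ lam : Fin m → ZMod p, ((∑ i : Fin m, C (lam i) * X (Sum.inl i)) + u)

namespace Lagrange

open Polynomial

variable {R G F : Type*} [CommRing R] [AddCommGroup G] [Fintype G] [FunLike F G R]
  [AddMonoidHomClass F G R]

theorem eval_add_map_nodal_univ (f : F) (g : G) (x : R) :
    (nodal univ f).eval (f g + x) = (nodal univ f).eval x := by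
  simp_rw [eval_nodal]
  exact Fintype.prod_equiv (Equiv.subRight g) _ _ fun i => by
    rw [Equiv.subRight_apply, map_sub]; ring

variable [IsDomain R] {f : F}

theorem taylor_nodal_univ (hf : Function.Injective f) (y : R) :
    taylor y (nodal univ f) = nodal univ f + Polynomial.C ((nodal univ f).eval y) := by
  refine eq_of_degree_sub_lt_of_eval_index_eq univ hf.injOn ?_ fun g _ => ?_
  · rw [sub_add_eq_sub_sub]
    refine (degree_sub_le _ _).trans_lt (max_lt ?_ ?_)
    · rw [← degree_nodal (v := f)]
      exact degree_sub_lt_right (degree_taylor _ _) nodal_ne_zero (leadingCoeff_taylor _ _)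
    · exact degree_C_le.trans_lt (WithBot.coe_pos.mpr (card_pos.mpr univ_nonempty))
  · rw [taylor_eval, Polynomial.eval_add, Polynomial.eval_C, eval_nodal_at_node (mem_univ g),
      zero_add, eval_add_map_nodal_univ]

theorem eval_add_nodal_univ (hf : Function.Injective f) (x y : R) :
    (nodal univ f).eval (x + y) = (nodal univ f).eval x + (nodal univ f).eval y := by
  simpa [taylor_eval] using congrArg (eval x) (taylor_nodal_univ hf y)

end Lagrange

section Mui

variable (p m : ℕ)

noncomputable abbrev muiLinearForm :
    (Fin m → ZMod p) →ₗ[ZMod p] MvPolynomial (Fin m ⊕ Bool) (ZMod p) :=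
  Fintype.linearCombination (ZMod p) fun i ↦ X (Sum.inl i)

theorem muiLinearForm_injective : Function.Injective (muiLinearForm p m) :=
  ((linearIndependent_X _ _).comp _ Sum.inl_injective).fintypeLinearCombination_injective

theorem muiAt_eq_eval_nodal [Fact p.Prime] (u : MvPolynomial (Fin m ⊕ Bool) (ZMod p)) :
    muiAt p m u = (Lagrange.nodal univ (muiLinearForm p m)).eval u := by
  rw [Lagrange.eval_nodal, muiAt]
  refine Fintype.prod_equiv (Equiv.neg _) _ _ fun lam => ?_
  simp only [Equiv.neg_apply, map_neg, sub_neg_eq_add, Fintype.linearCombination_apply,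
    smul_eq_C_mul]
  exact add_comm _ _

end Mui

/-- The Mùi invariant is additive in its last variable:
`V_{m+1}(t_1,…,t_m, X + Y) = V_{m+1}(t_1,…,t_m, X) + V_{m+1}(t_1,…,t_m, Y)`
in `F_p[t_1,…,t_m,X,Y]`. -/
theorem mui_additive_last_variable (p : ℕ) [Fact p.Prime] (m : ℕ) :
    muiAt p m (X (Sum.inr false) + X (Sum.inr true)) =
      muiAt p m (X (Sum.inr false)) + muiAt p m (X (Sum.inr true)) := by
  simp only [muiAt_eq_eval_nodal]
  exact Lagrange.eval_add_nodal_univ (muiLinearForm_injective p m) _ _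
end

section
/- For p an odd prime, the polynomials z^{(r)} = ∑_{i=1}^{n} (y_{2i-1}^{p^{r+1}} y_{2i} − y_{2i-1} y_{2i}^{p^{r+1}}) ∈ F_p[y_1,…,y_{2n}] are invariant under the action of the symplectic group Sp_{2n}(F_p) acting linearly on the variables y_1,…,y_{2n} preserving the standard symplectic form y_1∧y_2 + ⋯ + y_{2n-1}∧y_{2n}. -/
open MvPolynomial Finset

/-- `z^{(r)} = ∑_{i=1}^{n} (y_{2i-1}^{p^{r+1}} y_{2i} − y_{2i-1} y_{2i}^{p^{r+1}})`, where the
variable `Sum.inl i` is `y_{2i-1}` and `Sum.inr i` is `y_{2i}`. -/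
noncomputable def zpol (p : ℕ) [Fact p.Prime] (n r : ℕ) :
    MvPolynomial (Fin n ⊕ Fin n) (ZMod p) :=
  ∑ i : Fin n,
    (X (Sum.inl i) ^ p ^ (r + 1) * X (Sum.inr i)
      - X (Sum.inl i) * X (Sum.inr i) ^ p ^ (r + 1))

/-!
With `q = p ^ (r + 1)`, `y` the vector of variables and `y ^ q` its coordinatewise `q`-th power,
`z^{(r)} = yᵀ J (y ^ q)` for the standard symplectic matrix `J`. Substituting `y ↦ g y` sends
`y ^ q` to `g (y ^ q)`, because the `q`-th power map is additive in characteristic `p` and fixes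
the entries of `g ∈ 𝔽_p`. Hence `z^{(r)}` becomes `(g y)ᵀ J g (y ^ q) = yᵀ (gᵀ J g) (y ^ q)`,
and `gᵀ J g = J` for symplectic `g`.
-/

open Matrix

section SymplecticForm

variable {l R : Type*} [DecidableEq l] [Fintype l] [CommRing R]

theorem dotProduct_J_mulVec_of_mem_symplecticGroup {A : Matrix (l ⊕ l) (l ⊕ l) R}
    (hA : A ∈ symplecticGroup l R) (x y : l ⊕ l → R) :
    A *ᵥ x ⬝ᵥ J l R *ᵥ A *ᵥ y = x ⬝ᵥ J l R *ᵥ y := by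
  rw [← vecMul_transpose, ← dotProduct_mulVec, mulVec_mulVec, mulVec_mulVec,
    SymplecticGroup.mem_iff'.mp hA]

theorem RingHom.map_dotProduct_J_mulVec {S : Type*} [CommRing S] (f : R →+* S)
    (x y : l ⊕ l → R) : f (x ⬝ᵥ J l R *ᵥ y) = f ∘ x ⬝ᵥ J l S *ᵥ f ∘ y := by
  rw [RingHom.map_dotProduct]
  congr 1
  ext v
  rw [Function.comp_apply, RingHom.map_mulVec, map_J]

theorem MvPolynomial.aeval_X_dotProduct_J_mulVec_X_pow {S : Type*} [CommRing S] [Algebra R S]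
    (f : l ⊕ l → S) (k : ℕ) :
    aeval f (X ⬝ᵥ J l (MvPolynomial (l ⊕ l) R) *ᵥ X ^ k) = f ⬝ᵥ J l S *ᵥ f ^ k := by
  have hX : ⇑(aeval (R := R) f) ∘ X = f := by ext; simp
  have hXpow : ⇑(aeval (R := R) f) ∘ (X ^ k) = f ^ k := by ext; simp
  simpa only [AlgHom.toRingHom_eq_coe, RingHom.coe_coe, hX, hXpow] using
    RingHom.map_dotProduct_J_mulVec (aeval (R := R) f).toRingHom X (X ^ k)

end SymplecticForm

theorem mulVec_pow_char_pow {m n : Type*} [Fintype n] {p : ℕ} [Fact p.Prime] {S : Type*}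
    [CommRing S] [Algebra (ZMod p) S] [CharP S p] (A : Matrix m n (ZMod p)) (x : n → S)
    (k : ℕ) :
    (A.map (algebraMap (ZMod p) S) *ᵥ x) ^ p ^ k = A.map (algebraMap (ZMod p) S) *ᵥ x ^ p ^ k := by
  ext v
  simp only [Pi.pow_apply, mulVec, dotProduct, map_apply, sum_pow_char_pow, mul_pow, ← map_pow,
    ZMod.pow_card_pow]

theorem zpol_eq_X_dotProduct_J_mulVec_X_pow (p : ℕ) [Fact p.Prime] (n r : ℕ) :
    zpol p n r = X ⬝ᵥ J (Fin n) _ *ᵥ X ^ p ^ (r + 1) := by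
  simp only [zpol, dotProduct, mulVec, J, fromBlocks, of_apply, Pi.pow_apply,
    Fintype.sum_sum_type, ← sum_add_distrib, Sum.elim_inl, Sum.elim_inr, Matrix.zero_apply,
    Matrix.neg_apply, one_apply, zero_mul, neg_mul, ite_mul, one_mul, zero_add, add_zero,
    mul_neg, sum_neg_distrib, sum_ite_eq, mem_univ, ↓reduceIte]
  rw [neg_add_eq_sub, ← sum_sub_distrib]
  exact sum_congr rfl fun i _ => by ring

theorem zpol_symplectic_invariant_general (p : ℕ) [Fact p.Prime] (n r : ℕ)
    (g : Matrix (Fin n ⊕ Fin n) (Fin n ⊕ Fin n) (ZMod p))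
    (hg : g ∈ Matrix.symplecticGroup (Fin n) (ZMod p)) :
    aeval (fun v => ∑ w, C (g v w) * X w) (zpol p n r) = zpol p n r := by
  set G := g.map (algebraMap (ZMod p) (MvPolynomial (Fin n ⊕ Fin n) (ZMod p)))
  have hsubst : (fun v => ∑ w, C (g v w) * X w) = G *ᵥ X := rfl
  rw [hsubst, zpol_eq_X_dotProduct_J_mulVec_X_pow, aeval_X_dotProduct_J_mulVec_X_pow,
    mulVec_pow_char_pow, dotProduct_J_mulVec_of_mem_symplecticGroup (SymplecticGroup.map_mem hg _)]

/-- For `p` an odd prime, the polynomials `z^{(r)}` are invariant under the linear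
substitution action of the symplectic group `Sp_{2n}(F_p)` on the variables. -/
theorem zpol_symplectic_invariant (p : ℕ) [Fact p.Prime] (hodd : Odd p) (n r : ℕ)
    (g : Matrix (Fin n ⊕ Fin n) (Fin n ⊕ Fin n) (ZMod p))
    (hg : g ∈ Matrix.symplecticGroup (Fin n) (ZMod p)) :
    aeval (fun v => ∑ w, C (g v w) * X w) (zpol p n r) = zpol p n r :=
  zpol_symplectic_invariant_general p n r g hg
end
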